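/- arXiv:1801.00680 — 2 statements merged into one kernel-verified Lean document; each statement's English description precedes it below -/
import Mathlib

section
/- Let (⟨I₁, O₁, M₁⟩, …, ⟨Iₙ, Oₙ, Mₙ⟩) be conditional constraint manifolds over parameter index set Θ such that {O₁, …, Oₙ} is a partition of Θ and Iᵢ ⊆ O₁ ∪ … ∪ O_{i−1} for every i. Then S = ⋂ⱼ M̂ⱼ (each Mⱼ extended to all of Θ by taking a product with the domains of the unmentioned parameters) is a smooth submanifold of Z_Θ of codimension Σⱼ codim Mⱼ, provided it is nonempty. -/
open Set Function

noncomputable section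

variable {E : Type*} [NormedAddCommGroup E] [NormedSpace ℝ E]

/-- The tangent space of a set `S` at a point `x`: the span of all velocities at `x`
of smooth curves lying in `S` and passing through `x`. -/
def tangentSpaceOf (S : Set E) (x : E) : Submodule ℝ E :=
  Submodule.span ℝ
    {v | ∃ γ : ℝ → E, ContDiff ℝ (⊤ : ℕ∞) γ ∧ (∀ t, γ t ∈ S) ∧ γ 0 = x ∧ HasDerivAt γ v 0}

/-- `S` is a smooth embedded submanifold of codimension `c`: locally around each of its
points, `S` is the zero set of a smooth map into `ℝ^c` whose derivative is surjective. -/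
def IsSubmanifoldCodim (c : ℕ) (S : Set E) : Prop :=
  ∀ x ∈ S, ∃ (f : E → EuclideanSpace ℝ (Fin c)) (U : Set E),
    IsOpen U ∧ x ∈ U ∧ ContDiffOn ℝ (⊤ : ℕ∞) f U ∧
    (∀ y ∈ U, Surjective (fderiv ℝ f y)) ∧ U ∩ S = U ∩ f ⁻¹' {0}

/-- `S` is a smooth embedded submanifold of dimension `k`. -/
def IsSubmanifoldDim (k : ℕ) (S : Set E) : Prop :=
  ∃ c : ℕ, Module.finrank ℝ E = k + c ∧ IsSubmanifoldCodim c S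

end

open scoped Topology in
lemma fderiv_apply_eq_zero_of_tangent
    {E F : Type*} [NormedAddCommGroup E] [NormedSpace ℝ E]
    [NormedAddCommGroup F] [NormedSpace ℝ F]
    {S U : Set E} {f : E → F} {x : E} (hU : IsOpen U) (hxU : x ∈ U)
    (hf : ContDiffOn ℝ (⊤ : ℕ∞) f U) (h0 : ∀ y ∈ U, y ∈ S → f y = 0)
    {v : E} (hv : v ∈ tangentSpaceOf S x) : fderiv ℝ f x v = 0 := by
  have hle : tangentSpaceOf S x ≤ LinearMap.ker ((fderiv ℝ f x) : E →ₗ[ℝ] F) := by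
    rw [tangentSpaceOf, Submodule.span_le]
    rintro w ⟨γ, hγc, hγS, hγ0, hγd⟩
    have hdx : DifferentiableAt ℝ f (γ 0) := by
      rw [hγ0]
      exact (hf.contDiffAt (hU.mem_nhds hxU)).differentiableAt (by simp)
    have h1 : HasDerivAt (fun t => f (γ t)) (fderiv ℝ f (γ 0) w) 0 :=
      hdx.hasFDerivAt.comp_hasDerivAt 0 hγd
    have h2 : (fun t => f (γ t)) =ᶠ[𝓝 (0:ℝ)] fun _ => (0:F) := by
      have hmem : γ ⁻¹' U ∈ 𝓝 (0:ℝ) := by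
        apply hγc.continuous.continuousAt.preimage_mem_nhds
        rw [hγ0]; exact hU.mem_nhds hxU
      filter_upwards [hmem] with t ht
      exact h0 (γ t) ht (hγS t)
    have h3 : HasDerivAt (fun t => f (γ t)) 0 0 :=
      (hasDerivAt_const (0:ℝ) (0:F)).congr_of_eventuallyEq h2
    have h4 := h1.unique h3
    simp only [SetLike.mem_coe, LinearMap.mem_ker, ContinuousLinearMap.coe_coe]
    rw [← hγ0]; exact h4
  simpa using hle hv


/-- **Factored intersection theorem.** Let `Θ = ι` be a finite set of parameters, each
parameter `p` having as domain the smooth manifold `Z_p = ℝ^{d p}`, so the full domain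
is `Z_Θ = Π p, Z_p`.  Let `⟨I₁, O₁, M₁⟩, …, ⟨Iₙ, Oₙ, Mₙ⟩` be conditional constraint
manifolds: each `M̂ᵢ` (the extension of `Mᵢ` to all of `Θ` by a product with the
domains of the unmentioned parameters, i.e. a cylinder over the coordinates
`Pᵢ = Iᵢ ∪ Oᵢ`) is a nonempty smooth submanifold of `Z_Θ` of codimension `cᵢ` whose
projection onto the input coordinates `Iᵢ` is a submersion at every point.  Assume
`{O₁, …, Oₙ}` is a partition of `Θ` and `Iᵢ ⊆ O₁ ∪ … ∪ O_{i-1}` for every `i`.  Then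
`S = ⋂ᵢ M̂ᵢ`, provided it is nonempty, is a smooth submanifold of `Z_Θ` of codimension
`Σᵢ cᵢ`. -/
theorem factored_intersection_isSubmanifold
    {ι : Type*} [Fintype ι] [DecidableEq ι] (d : ι → ℕ) (n : ℕ)
    (I O : Fin n → Finset ι)
    (Mhat : Fin n → Set ((p : ι) → EuclideanSpace ℝ (Fin (d p))))
    (c : Fin n → ℕ)
    -- {O₁, …, Oₙ} is a partition of Θ
    (hOdisj : ∀ i j, i ≠ j → Disjoint (O i) (O j))
    (hOcover : ∀ p : ι, ∃ i, p ∈ O i)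
    -- inputs and outputs are disjoint, and Iᵢ ⊆ O₁ ∪ … ∪ O_{i-1}
    (hIO : ∀ i, Disjoint (I i) (O i))
    (hI : ∀ i : Fin n, ∀ p ∈ I i, ∃ j, j < i ∧ p ∈ O j)
    -- each M̂ᵢ is a cylinder depending only on the coordinates in Pᵢ = Iᵢ ∪ Oᵢ
    (hcyl : ∀ i, ∀ x y : (p : ι) → EuclideanSpace ℝ (Fin (d p)),
      (∀ p ∈ I i ∪ O i, x p = y p) → (x ∈ Mhat i ↔ y ∈ Mhat i))
    -- each M̂ᵢ is a nonempty smooth submanifold of codimension cᵢ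
    (hmfd : ∀ i, IsSubmanifoldCodim (c i) (Mhat i))
    (hne : ∀ i, (Mhat i).Nonempty)
    -- the projection onto the input coordinates Iᵢ is a submersion on M̂ᵢ
    (hsub : ∀ i, ∀ z ∈ Mhat i, ∀ w : (p : ι) → EuclideanSpace ℝ (Fin (d p)),
      ∃ v ∈ tangentSpaceOf (Mhat i) z, ∀ p ∈ I i, v p = w p)
    -- the intersection is nonempty
    (hSne : (⋂ i, Mhat i).Nonempty) :
    IsSubmanifoldCodim (∑ i, c i) (⋂ i, Mhat i) := by
  classical
  intro x hx
  have hxI : ∀ i, x ∈ Mhat i := fun i => mem_iInter.mp hx i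
  choose f U hUo hxU hcd hsurj hzero using fun i => hmfd i x (hxI i)
  -- basic consequences of the zero-set description
  have hzero' : ∀ i, ∀ y ∈ U i, y ∈ Mhat i → f i y = 0 := by
    intro i y hyU hyM
    have hmem : y ∈ U i ∩ Mhat i := ⟨hyU, hyM⟩
    rw [hzero i] at hmem
    simpa using hmem.2
  have hmem' : ∀ i, ∀ y ∈ U i, f i y = 0 → y ∈ Mhat i := by
    intro i y hyU hy0
    have hmem : y ∈ U i ∩ f i ⁻¹' {0} := ⟨hyU, by simpa using hy0⟩
    rw [← hzero i] at hmem
    exact hmem.2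
  -- coordinate projections
  let L : Finset ι → (((p : ι) → EuclideanSpace ℝ (Fin (d p))) →L[ℝ]
      ((p : ι) → EuclideanSpace ℝ (Fin (d p)))) := fun s =>
    ContinuousLinearMap.pi fun p => if p ∈ s then ContinuousLinearMap.proj p else 0
  have hL : ∀ s (y : (p : ι) → EuclideanSpace ℝ (Fin (d p))) p,
      L s y p = if p ∈ s then y p else 0 := by
    intro s y p
    simp only [L, ContinuousLinearMap.pi_apply]
    split_ifs <;> simp
  let P : Fin n → Finset ι := fun i => I i ∪ O i
  let π : Fin n → ((p : ι) → EuclideanSpace ℝ (Fin (d p))) →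
      ((p : ι) → EuclideanSpace ℝ (Fin (d p))) := fun i y => L (P i) y + (x - L (P i) x)
  have hπ : ∀ i (y : (p : ι) → EuclideanSpace ℝ (Fin (d p))) p,
      π i y p = if p ∈ P i then y p else x p := by
    intro i y p
    simp only [π, Pi.add_apply, Pi.sub_apply, hL]
    split_ifs <;> abel
  have hπx : ∀ i, π i x = x := by
    intro i; funext p; rw [hπ]; split_ifs <;> rfl
  have hπmem : ∀ i (y : (p : ι) → EuclideanSpace ℝ (Fin (d p))),
      (π i y ∈ Mhat i ↔ y ∈ Mhat i) := fun i y =>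
    hcyl i (π i y) y fun p hp => by rw [hπ, if_pos hp]
  have hπd : ∀ i (y : (p : ι) → EuclideanSpace ℝ (Fin (d p))),
      HasFDerivAt (π i) (L (P i)) y := fun i y =>
    ((L (P i)).hasFDerivAt).add_const _
  have hπc : ∀ i, ContDiff ℝ (⊤ : ℕ∞) (π i) := fun i => ((L (P i)).contDiff).add contDiff_const
  -- the derivative of each defining function kills tangent vectors …
  have hker : ∀ i, ∀ z, z ∈ Mhat i → z ∈ U i →
      ∀ v ∈ tangentSpaceOf (Mhat i) z, fderiv ℝ (f i) z v = 0 := fun i z _ hzU v hv =>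
    fderiv_apply_eq_zero_of_tangent (hUo i) hzU (hcd i) (hzero' i) hv
  -- … and vectors supported outside `P i`
  have hkerP : ∀ i, ∀ z, z ∈ Mhat i → z ∈ U i →
      ∀ v : (p : ι) → EuclideanSpace ℝ (Fin (d p)),
      (∀ p ∈ P i, v p = 0) → fderiv ℝ (f i) z v = 0 := by
    intro i z hzM hzU v hv
    apply hker i z hzM hzU
    apply Submodule.subset_span
    refine ⟨fun t => z + t • v, ?_, ?_, by simp, ?_⟩
    · exact contDiff_const.add (contDiff_id.smul contDiff_const)
    · intro t
      refine (hcyl i (z + t • v) z fun p hp => ?_).mpr hzM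
      have : v p = 0 := hv p hp
      simp [this]
    · simpa using ((hasDerivAt_id (0:ℝ)).smul_const v).const_add z
  -- at x, the derivative is surjective even restricted to the O-coordinates
  have hTsurj : ∀ i, Surjective ⇑((fderiv ℝ (f i) x).comp (L (O i))) := by
    intro i b
    obtain ⟨z, hz⟩ := hsurj i x (hxU i) b
    obtain ⟨t, htT, htI⟩ := hsub i x (hxI i) z
    have ht0 : fderiv ℝ (f i) x t = 0 := hker i x (hxI i) (hxU i) t htT
    refine ⟨z - t, ?_⟩
    have hdiff : fderiv ℝ (f i) x ((z - t) - L (O i) (z - t)) = 0 := by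
      apply hkerP i x (hxI i) (hxU i)
      intro p hp
      by_cases hpO : p ∈ O i
      · simp [Pi.sub_apply, hL, hpO]
      · have hpI : p ∈ I i := (Finset.mem_union.mp hp).resolve_right hpO
        have hzt : z p - t p = 0 := by rw [htI p hpI, sub_self]
        simp [Pi.sub_apply, hL, hpO, hzt]
    have h5 : fderiv ℝ (f i) x (z - t) - fderiv ℝ (f i) x (L (O i) (z - t)) = 0 := by
      rw [← map_sub]; exact hdiff
    have h6 : fderiv ℝ (f i) x (L (O i) (z - t)) = fderiv ℝ (f i) x (z - t) :=
      (sub_eq_zero.mp h5).symm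
    show (fderiv ℝ (f i) x) (L (O i) (z - t)) = b
    rw [h6, map_sub, hz, ht0, sub_zero]
  -- right inverses at x
  have hBex : ∀ i, ∃ B : EuclideanSpace ℝ (Fin (c i)) →L[ℝ]
      ((p : ι) → EuclideanSpace ℝ (Fin (d p))),
      ((fderiv ℝ (f i) x).comp (L (O i))).comp B = ContinuousLinearMap.id ℝ _ := by
    intro i
    obtain ⟨B₀, hB₀⟩ :=
      (((fderiv ℝ (f i) x).comp (L (O i))) :
        ((p : ι) → EuclideanSpace ℝ (Fin (d p))) →ₗ[ℝ]
          EuclideanSpace ℝ (Fin (c i))).exists_rightInverse_of_surjective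
      (LinearMap.range_eq_top.mpr (hTsurj i))
    refine ⟨LinearMap.toContinuousLinearMap B₀, ContinuousLinearMap.ext fun b => ?_⟩
    simpa using LinearMap.congr_fun hB₀ b
  choose B hB using hBex
  -- the good neighbourhoods
  let V : Fin n → Set ((p : ι) → EuclideanSpace ℝ (Fin (d p))) := fun i =>
    (π i ⁻¹' U i) ∩
      (fun y => (fderiv ℝ (f i) (π i y)).comp ((L (O i)).comp (B i))) ⁻¹' {u | IsUnit u}
  have hVopen : ∀ i, IsOpen (V i) := by
    intro i
    apply ContinuousOn.isOpen_inter_preimage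
    · exact ContinuousOn.clm_comp
        (((hcd i).continuousOn_fderiv_of_isOpen (hUo i) (by simp)).comp
          (hπc i).continuous.continuousOn (fun y hy => hy))
        continuousOn_const
    · exact (hUo i).preimage (hπc i).continuous
    · exact Units.isOpen
  have hxV : ∀ i, x ∈ V i := by
    intro i
    refine ⟨?_, ?_⟩
    · show π i x ∈ U i
      rw [hπx]; exact hxU i
    · show IsUnit ((fderiv ℝ (f i) (π i x)).comp ((L (O i)).comp (B i)))
      have : (fderiv ℝ (f i) (π i x)).comp ((L (O i)).comp (B i)) =
          ContinuousLinearMap.id ℝ _ := by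
        rw [hπx, ← ContinuousLinearMap.comp_assoc, hB i]
      rw [this, ← ContinuousLinearMap.one_def]
      exact isUnit_one
  have hVsurj : ∀ i, ∀ y ∈ V i,
      Surjective ⇑((fderiv ℝ (f i) (π i y)).comp (L (O i))) := by
    intro i y hy b
    obtain ⟨u, hu⟩ := hy.2
    have hu' : (↑u : EuclideanSpace ℝ (Fin (c i)) →L[ℝ] EuclideanSpace ℝ (Fin (c i))) =
        (fderiv ℝ (f i) (π i y)).comp ((L (O i)).comp (B i)) := by simpa using hu
    refine ⟨(B i) (((u⁻¹ : _ˣ) : EuclideanSpace ℝ (Fin (c i)) →L[ℝ] _) b), ?_⟩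
    have e1 : ((fderiv ℝ (f i) (π i y)).comp (L (O i)))
        ((B i) (((u⁻¹ : _ˣ) : EuclideanSpace ℝ (Fin (c i)) →L[ℝ] _) b)) =
        ((fderiv ℝ (f i) (π i y)).comp ((L (O i)).comp (B i)))
        (((u⁻¹ : _ˣ) : EuclideanSpace ℝ (Fin (c i)) →L[ℝ] _) b) := rfl
    rw [e1, ← hu', ← ContinuousLinearMap.mul_apply, u.mul_inv,
      ContinuousLinearMap.one_apply]
  -- the linear identification of the product target with Euclidean space
  have hfr : Module.finrank ℝ ((i : Fin n) → EuclideanSpace ℝ (Fin (c i))) =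
      Module.finrank ℝ (EuclideanSpace ℝ (Fin (∑ i, c i))) := by
    simp [Module.finrank_pi_fintype, finrank_euclideanSpace_fin]
  let e : ((i : Fin n) → EuclideanSpace ℝ (Fin (c i))) ≃L[ℝ]
      EuclideanSpace ℝ (Fin (∑ i, c i)) := ContinuousLinearEquiv.ofFinrankEq hfr
  let eL : ((i : Fin n) → EuclideanSpace ℝ (Fin (c i))) →L[ℝ]
      EuclideanSpace ℝ (Fin (∑ i, c i)) := e
  refine ⟨fun y => eL (fun i => f i (π i y)), ⋂ i, V i,
    isOpen_iInter_of_finite hVopen, mem_iInter.mpr hxV, ?_, ?_, ?_⟩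
  · -- smoothness
    exact eL.contDiff.comp_contDiffOn (contDiffOn_pi.mpr fun i =>
      (hcd i).comp ((hπc i).contDiffOn) fun y hy => (mem_iInter.mp hy i).1)
  · -- surjectivity of the derivative
    intro y hy
    have hyV : ∀ i, y ∈ V i := mem_iInter.mp hy
    let A : (i : Fin n) → ((p : ι) → EuclideanSpace ℝ (Fin (d p))) →L[ℝ]
        EuclideanSpace ℝ (Fin (c i)) := fun i => (fderiv ℝ (f i) (π i y)).comp (L (P i))
    have hder : ∀ i : Fin n, HasFDerivAt (fun y => f i (π i y)) (A i) y := by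
      intro i
      have hdf : HasFDerivAt (f i) (fderiv ℝ (f i) (π i y)) (π i y) :=
        (((hcd i).contDiffAt ((hUo i).mem_nhds (hyV i).1)).differentiableAt
          (by simp)).hasFDerivAt
      exact hdf.comp y (hπd i y)
    have hDer : HasFDerivAt (fun y => eL (fun i => f i (π i y)))
        (eL.comp (ContinuousLinearMap.pi A)) y :=
      eL.hasFDerivAt.comp y (hasFDerivAt_pi.mpr hder)
    rw [hDer.fderiv]
    -- the O-restricted surjectivity transfers to A i
    have hA2 : ∀ i z, A i (L (O i) z) =
        ((fderiv ℝ (f i) (π i y)).comp (L (O i))) z := by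
      intro i z
      show fderiv ℝ (f i) (π i y) (L (P i) (L (O i) z)) =
        fderiv ℝ (f i) (π i y) (L (O i) z)
      congr 1
      funext p
      rw [hL]
      split_ifs with hpP
      · rfl
      · rw [hL, if_neg fun hpO => hpP (Finset.mem_union_right _ hpO)]
    -- triangular construction
    have key : ∀ k : ℕ, k ≤ n → ∀ w : (i : Fin n) → EuclideanSpace ℝ (Fin (c i)),
        ∃ v : (p : ι) → EuclideanSpace ℝ (Fin (d p)),
          (∀ p : ι, (∀ j : Fin n, (j : ℕ) < k → p ∉ O j) → v p = 0) ∧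
          ∀ i : Fin n, (i : ℕ) < k → A i v = w i := by
      intro k
      induction k with
      | zero =>
        intro _ w
        exact ⟨0, fun p _ => rfl, fun i hi => absurd hi (Nat.not_lt_zero _)⟩
      | succ k ih =>
        intro hk w
        obtain ⟨v, hvsupp, hvA⟩ := ih (Nat.le_of_succ_le hk) w
        have hkn : k < n := hk
        obtain ⟨z, hz⟩ := hVsurj ⟨k, hkn⟩ y (hyV ⟨k, hkn⟩) (w ⟨k, hkn⟩ - A ⟨k, hkn⟩ v)
        refine ⟨v + L (O ⟨k, hkn⟩) z, ?_, ?_⟩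
        · intro p hp
          have h1 : v p = 0 := hvsupp p fun j hj => hp j (Nat.lt_succ_of_lt hj)
          have h2 : p ∉ O ⟨k, hkn⟩ := hp ⟨k, hkn⟩ (Nat.lt_succ_self k)
          simp [Pi.add_apply, h1, hL, h2]
        · intro i' hi'
          rcases Nat.lt_succ_iff_lt_or_eq.mp hi' with hlt | heq
          · have hzer : A i' (L (O ⟨k, hkn⟩) z) = 0 := by
              have hLz : L (P i') (L (O ⟨k, hkn⟩) z) = 0 := by
                funext p
                rw [hL]
                split_ifs with hpP
                · rw [hL]
                  split_ifs with hpO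
                  · exfalso
                    rcases Finset.mem_union.mp hpP with hpI | hpO'
                    · obtain ⟨j, hj, hpOj⟩ := hI i' p hpI
                      have hne : j ≠ ⟨k, hkn⟩ := by
                        intro hji
                        have : (j : ℕ) < k := lt_of_lt_of_le hj (le_of_lt hlt)
                        rw [hji] at this
                        exact absurd this (lt_irrefl _)
                      exact Finset.disjoint_left.mp (hOdisj j ⟨k, hkn⟩ hne) hpOj hpO
                    · have hne : i' ≠ ⟨k, hkn⟩ := by
                        intro hii
                        rw [hii] at hlt
                        exact absurd hlt (lt_irrefl _)
                      exact Finset.disjoint_left.mp (hOdisj i' ⟨k, hkn⟩ hne) hpO' hpO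
                  · simp
                · simp
              have : A i' (L (O ⟨k, hkn⟩) z) =
                  fderiv ℝ (f i') (π i' y) (L (P i') (L (O ⟨k, hkn⟩) z)) := rfl
              rw [this, hLz, map_zero]
            rw [map_add, hzer, add_zero]
            exact hvA i' hlt
          · have hieq : i' = ⟨k, hkn⟩ := Fin.ext heq
            subst hieq
            rw [map_add, hA2, hz, add_sub_cancel]
    intro w
    obtain ⟨w', hw'⟩ := e.surjective w
    obtain ⟨v, _, hv⟩ := key n le_rfl w'
    refine ⟨v, ?_⟩
    have hpiv : (ContinuousLinearMap.pi A) v = w' := by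
      funext i
      rw [ContinuousLinearMap.pi_apply]
      exact hv i i.isLt
    show eL ((ContinuousLinearMap.pi A) v) = w
    rw [hpiv]
    exact hw'
  · -- zero-set description
    ext y
    simp only [mem_inter_iff, mem_iInter, mem_preimage, mem_singleton_iff]
    constructor
    · rintro ⟨hyV, hyM⟩
      refine ⟨hyV, ?_⟩
      have h0 : (fun i => f i (π i y)) = 0 := by
        funext i
        exact hzero' i (π i y) (hyV i).1 ((hπmem i y).mpr (hyM i))
      rw [h0, map_zero]
    · rintro ⟨hyV, hy0⟩
      refine ⟨hyV, fun i => ?_⟩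
      have h0 : (fun i => f i (π i y)) = 0 := e.map_eq_zero_iff.mp hy0
      have hfi : f i (π i y) = 0 := congrFun h0 i
      exact (hπmem i y).mp (hmem' i (π i y) (hyV i).1 hfi)
end

section
/- Under the hypotheses of the factored intersection theorem (O₁,…,Oₙ partition Θ; Iᵢ ⊆ O₁ ∪ … ∪ O_{i−1}; each projection π_{Iᵢ} : Mᵢ → Z_{Iᵢ} is a submersion), the dimension of the intersection submanifold S satisfies dim S = Σᵢ (dim Mᵢ − dim Z_{Iᵢ}). -/
open Set Function

/-- Velocities of smooth curves in `S` through `x` are killed by the differential of any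
map vanishing on `S` near `x`. -/
lemma tangentSpaceOf_fderiv_eq_zero {E F : Type*} [NormedAddCommGroup E] [NormedSpace ℝ E]
    [NormedAddCommGroup F] [NormedSpace ℝ F]
    {S : Set E} {f : E → F} {U : Set E} {x : E} (hU : IsOpen U) (hx : x ∈ U)
    (hf : DifferentiableAt ℝ f x) (h0 : ∀ y ∈ U, y ∈ S → f y = 0)
    {v : E} (hv : v ∈ tangentSpaceOf S x) :
    fderiv ℝ f x v = 0 := by
  have hle : tangentSpaceOf S x ≤ LinearMap.ker (fderiv ℝ f x : E →ₗ[ℝ] F) := by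
    rw [tangentSpaceOf, Submodule.span_le]
    rintro w ⟨γ, hγ, hγS, hγ0, hγd⟩
    have hcurve : HasDerivAt (fun t => f (γ t)) (fderiv ℝ f x w) 0 := by
      have h1 : HasFDerivAt f (fderiv ℝ f x) (γ 0) := hγ0 ▸ hf.hasFDerivAt
      exact h1.comp_hasDerivAt 0 hγd
    have hev : (fun t => f (γ t)) =ᶠ[nhds (0:ℝ)] fun _ => (0:F) := by
      have hU0 : γ 0 ∈ U := hγ0 ▸ hx
      have : ∀ᶠ t in nhds (0:ℝ), γ t ∈ U :=
        hγ.continuous.continuousAt.preimage_mem_nhds (hU.mem_nhds hU0)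
      filter_upwards [this] with t ht using h0 _ ht (hγS t)
    have h0' : HasDerivAt (fun t => f (γ t)) 0 0 :=
      (hasDerivAt_const (0:ℝ) (0:F)).congr_of_eventuallyEq hev
    simpa [LinearMap.mem_ker] using hcurve.unique h0'
  exact hle hv

/-- **Dimension formula for the factored intersection theorem.** Under the hypotheses of
the factored intersection theorem (`O₁, …, Oₙ` partition `Θ`; `Iᵢ ⊆ O₁ ∪ … ∪ O_{i-1}`;
each projection `π_{Iᵢ} : Mᵢ → Z_{Iᵢ}` is a submersion; each `Mᵢ` has codimension `cᵢ`,
hence dimension `dim Mᵢ = dim Z_{Pᵢ} - cᵢ` with `Pᵢ = Iᵢ ∪ Oᵢ`), the nonempty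
intersection `S` of the extensions of the `Mᵢ` is a smooth submanifold of `Z_Θ` whose
dimension satisfies `dim S = Σᵢ (dim Mᵢ - dim Z_{Iᵢ})`. -/
theorem factored_intersection_dim
    {ι : Type*} [Fintype ι] [DecidableEq ι] (d : ι → ℕ) (n : ℕ)
    (I O : Fin n → Finset ι)
    (Mhat : Fin n → Set ((p : ι) → EuclideanSpace ℝ (Fin (d p))))
    (c : Fin n → ℕ)
    (hOdisj : ∀ i j, i ≠ j → Disjoint (O i) (O j))
    (hOcover : ∀ p : ι, ∃ i, p ∈ O i)
    (hIO : ∀ i, Disjoint (I i) (O i))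
    (hI : ∀ i : Fin n, ∀ p ∈ I i, ∃ j, j < i ∧ p ∈ O j)
    (hcyl : ∀ i, ∀ x y : (p : ι) → EuclideanSpace ℝ (Fin (d p)),
      (∀ p ∈ I i ∪ O i, x p = y p) → (x ∈ Mhat i ↔ y ∈ Mhat i))
    (hmfd : ∀ i, IsSubmanifoldCodim (c i) (Mhat i))
    (hne : ∀ i, (Mhat i).Nonempty)
    (hsub : ∀ i, ∀ z ∈ Mhat i, ∀ w : (p : ι) → EuclideanSpace ℝ (Fin (d p)),
      ∃ v ∈ tangentSpaceOf (Mhat i) z, ∀ p ∈ I i, v p = w p)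
    (hSne : (⋂ i, Mhat i).Nonempty) :
    -- S is a submanifold of codimension Σᵢ cᵢ, and its dimension
    -- dim S = dim Z_Θ - Σᵢ cᵢ satisfies dim S = Σᵢ (dim Mᵢ - dim Z_{Iᵢ}),
    -- where dim Mᵢ = (Σ_{p ∈ Pᵢ} d p) - cᵢ and dim Z_{Iᵢ} = Σ_{p ∈ Iᵢ} d p
    IsSubmanifoldCodim (∑ i, c i) (⋂ i, Mhat i) ∧
    (Module.finrank ℝ ((p : ι) → EuclideanSpace ℝ (Fin (d p))) : ℤ) - ∑ i, (c i : ℤ) =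
      ∑ i, (((∑ p ∈ I i ∪ O i, (d p : ℤ)) - (c i : ℤ)) - ∑ p ∈ I i, (d p : ℤ)) := by
  constructor
  · -- the submanifold statement
    intro x hx
    have hxI : ∀ i, x ∈ Mhat i := by simpa [Set.mem_iInter] using hx
    choose f U hUo hxU hfc hfs hfz using fun i => hmfd i x (hxI i)
    -- f i vanishes on U i ∩ Mhat i
    have hvanish : ∀ i, ∀ y ∈ U i, y ∈ Mhat i → f i y = 0 := by
      intro i y hyU hyM
      have : y ∈ U i ∩ f i ⁻¹' {0} := (hfz i) ▸ ⟨hyU, hyM⟩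
      simpa using this.2
    have hdiff : ∀ i, ∀ y ∈ U i, DifferentiableAt ℝ (f i) y := fun i y hy =>
      ((hfc i).contDiffAt ((hUo i).mem_nhds hy)).differentiableAt (by simp)
    have hker : ∀ i, ∀ v ∈ tangentSpaceOf (Mhat i) x, fderiv ℝ (f i) x v = 0 :=
      fun i v hv => tangentSpaceOf_fderiv_eq_zero (hUo i) (hxU i) (hdiff i x (hxU i))
        (hvanish i) hv
    -- the differential of f i kills vectors supported outside I i ∪ O i
    have hoff : ∀ i, ∀ v : (p : ι) → EuclideanSpace ℝ (Fin (d p)),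
        (∀ p ∈ I i ∪ O i, v p = 0) → fderiv ℝ (f i) x v = 0 := by
      intro i v hv
      apply hker i
      apply Submodule.subset_span
      refine ⟨fun t => x + t • v, ?_, ?_, by simp, ?_⟩
      · exact contDiff_const.add (contDiff_id.smul contDiff_const)
      · intro t
        refine (hcyl i (x + t • v) x fun p hp => ?_).mpr (hxI i)
        simp [hv p hp]
      · simpa using ((hasDerivAt_id (0:ℝ)).smul_const v).const_add x
    -- block surjectivity: the differential of f i restricted to the O i block is onto
    have hblock : ∀ i t, ∃ w : (p : ι) → EuclideanSpace ℝ (Fin (d p)),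
        (∀ p, p ∉ O i → w p = 0) ∧ fderiv ℝ (f i) x w = t := by
      intro i t
      obtain ⟨v, hv⟩ := hfs i x (hxU i) t
      obtain ⟨u, huT, huI⟩ := hsub i x (hxI i) v
      set w : (p : ι) → EuclideanSpace ℝ (Fin (d p)) :=
        fun p => if p ∈ O i then v p - u p else 0 with hw
      refine ⟨w, fun p hp => by simp [hw, hp], ?_⟩
      have h1 : fderiv ℝ (f i) x (v - u - w) = 0 := by
        apply hoff i
        intro p hp
        rcases Finset.mem_union.1 hp with hpI | hpO
        · have h2 := huI p hpI
          have hpo : p ∉ O i := Finset.disjoint_left.1 (hIO i) hpI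
          simp [hw, hpo, h2]
        · simp [hw, hpO]
      have h2 := hker i u huT
      rw [map_sub, map_sub, sub_sub, sub_eq_zero] at h1
      rw [h2, zero_add] at h1
      rw [← h1]
      exact hv
    -- triangular construction of a common preimage
    have htri : ∀ (t : ∀ i, EuclideanSpace ℝ (Fin (c i))) (k : ℕ),
        ∃ v : (p : ι) → EuclideanSpace ℝ (Fin (d p)),
          (∀ p : ι, (∀ j : Fin n, p ∈ O j → k ≤ (j : ℕ)) → v p = 0) ∧
          ∀ i : Fin n, (i : ℕ) < k → fderiv ℝ (f i) x v = t i := by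
      intro t k
      induction k with
      | zero => exact ⟨0, fun p _ => rfl, fun i h => absurd h (Nat.not_lt_zero _)⟩
      | succ k ih =>
        obtain ⟨v, hvsupp, hvval⟩ := ih
        by_cases hk : k < n
        · set i₀ : Fin n := ⟨k, hk⟩ with hi₀
          obtain ⟨w, hwsupp, hwval⟩ := hblock i₀ (t i₀ - fderiv ℝ (f i₀) x v)
          refine ⟨v + w, ?_, ?_⟩
          · intro p hp
            have h1 : v p = 0 := hvsupp p fun j hj => Nat.le_of_succ_le (hp j hj)
            have h2 : w p = 0 := by
              apply hwsupp
              intro hpO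
              have h3 := hp i₀ hpO
              exact absurd h3 (Nat.not_succ_le_self k)
            simp [Pi.add_apply, h1, h2]
          · intro i hi
            rw [map_add]
            rcases Nat.lt_succ_iff_lt_or_eq.1 hi with h | h
            · rw [hvval i h]
              have hwz : fderiv ℝ (f i) x w = 0 := by
                apply hoff i
                intro p hp
                apply hwsupp p
                intro hpO
                rcases Finset.mem_union.1 hp with hpI | hpO'
                · obtain ⟨j, hj, hpOj⟩ := hI i p hpI
                  have hji : (j : ℕ) < (i₀ : ℕ) := lt_trans (Fin.lt_def.1 hj) h
                  have hne' : i₀ ≠ j := by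
                    intro hij
                    rw [hij] at hji
                    exact lt_irrefl _ hji
                  exact Finset.disjoint_left.1 (hOdisj i₀ j hne') hpO hpOj
                · have hne' : i₀ ≠ i := by
                    intro hij
                    rw [← hij] at h
                    exact absurd h (lt_irrefl k)
                  exact Finset.disjoint_left.1 (hOdisj i₀ i hne') hpO hpO'
              rw [hwz, add_zero]
            · have hii : i = i₀ := Fin.ext h
              subst hii
              rw [hwval]
              abel
        · refine ⟨v, fun p hp => hvsupp p fun j hj => Nat.le_of_succ_le (hp j hj),
            fun i hi => hvval i ?_⟩
          exact lt_of_lt_of_le i.isLt (Nat.le_of_not_lt hk)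
    -- set up the global map
    set V : Set ((p : ι) → EuclideanSpace ℝ (Fin (d p))) := ⋂ i, U i with hV
    have hVo : IsOpen V := isOpen_iInter_of_finite hUo
    have hxV : x ∈ V := Set.mem_iInter.2 hxU
    have hVsub : ∀ i, V ⊆ U i := fun i => Set.iInter_subset U i
    set g : ((p : ι) → EuclideanSpace ℝ (Fin (d p))) → (∀ i, EuclideanSpace ℝ (Fin (c i))) :=
      fun y i => f i y with hg
    have hgc : ContDiffOn ℝ (⊤ : ℕ∞) g V := contDiffOn_pi.2 fun i => (hfc i).mono (hVsub i)
    have hgd : ∀ y ∈ V, DifferentiableAt ℝ g y := fun y hy =>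
      differentiableAt_pi.2 fun i => hdiff i y (hVsub i hy)
    have hfr : Module.finrank ℝ (∀ i, EuclideanSpace ℝ (Fin (c i)))
        = Module.finrank ℝ (EuclideanSpace ℝ (Fin (∑ i, c i))) := by
      simp [Module.finrank_pi_fintype, finrank_euclideanSpace_fin]
    set e : (∀ i, EuclideanSpace ℝ (Fin (c i))) ≃L[ℝ] EuclideanSpace ℝ (Fin (∑ i, c i)) :=
      ContinuousLinearEquiv.ofFinrankEq hfr with he
    set F : ((p : ι) → EuclideanSpace ℝ (Fin (d p))) → EuclideanSpace ℝ (Fin (∑ i, c i)) :=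
      fun y => e (g y) with hF
    have hFc : ContDiffOn ℝ (⊤ : ℕ∞) F V :=
      (e.toContinuousLinearMap.contDiff.comp_contDiffOn hgc)
    have hFd : ∀ y ∈ V, fderiv ℝ F y
        = (e.toContinuousLinearMap).comp (fderiv ℝ g y) := by
      intro y hy
      exact (e.toContinuousLinearMap.hasFDerivAt.comp y (hgd y hy).hasFDerivAt).fderiv
    have hgderiv : ∀ y ∈ V, fderiv ℝ g y
        = ContinuousLinearMap.pi fun i => fderiv ℝ (f i) y := fun y hy =>
      fderiv_pi fun i => hdiff i y (hVsub i hy)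
    -- surjectivity at x
    have hsurjx : Surjective (fderiv ℝ F x) := by
      rw [hFd x hxV, hgderiv x hxV]
      intro z
      obtain ⟨v, -, hvval⟩ := htri (e.symm z) n
      refine ⟨v, ?_⟩
      have h1 : (ContinuousLinearMap.pi fun i => fderiv ℝ (f i) x) v = e.symm z := by
        funext i
        exact hvval i i.isLt
      simp [ContinuousLinearMap.comp_apply, h1]
    -- shrink to an open set where the differential stays surjective
    have hcont : ContinuousOn (fderiv ℝ F) V :=
      hFc.continuousOn_fderiv_of_isOpen hVo (by simp)
    choose ev hev using fun k =>
      hsurjx ((EuclideanSpace.basisFun (Fin (∑ i, c i)) ℝ).toBasis k)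
    set Φ : ((p : ι) → EuclideanSpace ℝ (Fin (d p))) →
        (Fin (∑ i, c i)) → EuclideanSpace ℝ (Fin (∑ i, c i)) :=
      fun y k => fderiv ℝ F y (ev k) with hΦ
    have hΦc : ContinuousOn Φ V := by
      apply continuousOn_pi.2
      intro k
      exact (ContinuousLinearMap.apply ℝ _ (ev k)).continuous.comp_continuousOn hcont
    set W := V ∩ Φ ⁻¹' {h | LinearIndependent ℝ h} with hWdef
    have hWo : IsOpen W := hΦc.isOpen_inter_preimage hVo isOpen_setOf_linearIndependent
    have hxW : x ∈ W := by
      refine ⟨hxV, ?_⟩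
      have : Φ x = fun k => (EuclideanSpace.basisFun (Fin (∑ i, c i)) ℝ).toBasis k :=
        funext fun k => hev k
      show LinearIndependent ℝ (Φ x)
      rw [this]
      exact (EuclideanSpace.basisFun (Fin (∑ i, c i)) ℝ).toBasis.linearIndependent
    have hWV : W ⊆ V := Set.inter_subset_left
    -- surjectivity on W
    have hsurjW : ∀ y ∈ W, Surjective (fderiv ℝ F y) := by
      intro y hy
      have hli : LinearIndependent ℝ (Φ y) := hy.2
      have hspan : Submodule.span ℝ (Set.range (Φ y)) = ⊤ :=
        hli.span_eq_top_of_card_eq_finrank' (by simp [finrank_euclideanSpace_fin])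
      have hle : Submodule.span ℝ (Set.range (Φ y)) ≤ LinearMap.range (fderiv ℝ F y :
          ((p : ι) → EuclideanSpace ℝ (Fin (d p))) →ₗ[ℝ] EuclideanSpace ℝ (Fin (∑ i, c i))) := by
        rw [Submodule.span_le]
        rintro z ⟨k, rfl⟩
        exact ⟨ev k, rfl⟩
      rw [← ContinuousLinearMap.coe_coe, ← LinearMap.range_eq_top]
      exact top_unique (hspan ▸ hle)
    -- the zero set
    have hzero : W ∩ (⋂ i, Mhat i) = W ∩ F ⁻¹' {0} := by
      ext y
      simp only [Set.mem_inter_iff, Set.mem_iInter, Set.mem_preimage, Set.mem_singleton_iff]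
      constructor
      · rintro ⟨hyW, hyM⟩
        refine ⟨hyW, ?_⟩
        have hgy : g y = 0 := funext fun i => hvanish i y (hVsub i (hWV hyW)) (hyM i)
        simp [hF, hgy]
      · rintro ⟨hyW, hyF⟩
        refine ⟨hyW, fun i => ?_⟩
        have hFy : F y = 0 := hyF
        have hgy : g y = 0 := by
          apply e.injective
          rw [map_zero]
          exact hFy
        have hfy : f i y = 0 := congrFun hgy i
        have : y ∈ U i ∩ f i ⁻¹' {0} := ⟨hVsub i (hWV hyW), by simpa using hfy⟩
        rw [← hfz i] at this
        exact this.2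
    exact ⟨F, W, hWo, hxW, hFc.mono hWV, hsurjW, hzero⟩
  · -- the dimension count
    have h1 : Module.finrank ℝ ((p : ι) → EuclideanSpace ℝ (Fin (d p))) = ∑ p, d p := by
      simp [Module.finrank_pi_fintype, finrank_euclideanSpace_fin]
    have h2 : ∀ i, ((∑ p ∈ I i ∪ O i, (d p : ℤ)) - (c i : ℤ)) - ∑ p ∈ I i, (d p : ℤ)
        = ∑ p ∈ O i, (d p : ℤ) - (c i : ℤ) := by
      intro i
      rw [Finset.sum_union (hIO i)]
      ring
    have h3 : ∑ i, ∑ p ∈ O i, (d p : ℤ) = ∑ p, (d p : ℤ) := by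
      have hbU : (Finset.univ : Finset ι) = Finset.univ.biUnion O := by
        ext p
        simpa using hOcover p
      rw [hbU, Finset.sum_biUnion]
      intro i _ j _ hij
      exact hOdisj i j hij
    rw [h1, Finset.sum_congr rfl fun i _ => h2 i, Finset.sum_sub_distrib, h3]
    push_cast
    ring
end
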